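/- Let γ₁ < ω₀ < γ₂ be reals, N ≥ 1 an integer, and φ : [γ₁,γ₂] → ℝ a real-valued function that is N times continuously differentiable. Define A(t) := ∫_{ω₀}^{γ₂} φ(ω)·log|ω − ω₀|·e^{iωt} dω, Ã(t) := ∫_{γ₁}^{ω₀} φ(ω)·log|ω − ω₀|·e^{iωt} dω, and B(t) := ∫_{−ω₀}^{−γ₁} φ(−ω)·log|ω + ω₀|·e^{iωt} dω. Assume that as t → +∞: A(t) = ∑_{n=0}^{N−1} i^{n+1}·φ⁽ⁿ⁾(ω₀)·[ψ(n+1) − log t + iπ/2]·t^{−n−1}·e^{iω₀t} + o(t^{−N}) and B(t) = ∑_{n=0}^{N−1} i^{n+1}·(−1)ⁿ·φ⁽ⁿ⁾(ω₀)·[ψ(n+1) − log t + iπ/2]·t^{−n−1}·e^{−iω₀t} + o(t^{−N}) (these are Erdélyi's one-sided expansions). Then Ã(t) = conj(B(t)), and the two-sided Fourier integral ρ̂(t) := A(t) + Ã(t) = ∫_{γ₁}^{γ₂} φ(ω)·log|ω − ω₀|·e^{iωt} dω satisfies ρ̂(t) = −π·∑_{n=0}^{N−1} iⁿ·φ⁽ⁿ⁾(ω₀)·t^{−n−1}·e^{iω₀t}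 + o(t^{−N}) as t → +∞; in particular the log t terms cancel and the leading decay is proportional to 1/t. -/

import Mathlib

/-!
Reflecting `ω ↦ -ω` and conjugating turns the integral over `[γ₁, ω₀]` into `B`, so
`ρ̂ = A + conj B`. In Erdélyi's expansions, the `n`-th terms of `A` and of `conj B` carry the
same real coefficient `ψ(n+1) - log t` multiplied by `iⁿ⁺¹` and by `-iⁿ⁺¹` respectively, so
these parts cancel, while the two `iπ/2` contributions add up to `-π iⁿ`.
-/

open Filter Asymptotics MeasureTheory ComplexConjugate

noncomputable def digamma (x : ℝ) : ℝ := deriv Real.Gamma x / Real.Gamma x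

theorem intervalIntegrable_ofReal_mul_log_abs_sub_mul_exp {f : ℝ → ℝ} {a b c : ℝ} (t : ℝ)
    (hf : ContinuousOn f (Set.uIcc a b)) :
    IntervalIntegrable
      (fun ω : ℝ => (f ω * Real.log |ω - c| : ℂ) * Complex.exp (Complex.I * ω * t))
      volume a b := by
  have hlog : IntervalIntegrable (fun ω : ℝ => Real.log (ω - c)) volume a b := by
    simpa using
      (intervalIntegral.intervalIntegrable_log' (a := a - c) (b := b - c)).comp_sub_right c
  have hreal : IntervalIntegrable (fun ω : ℝ => ((f ω * Real.log (ω - c) : ℝ) : ℂ)) volume a b :=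
    have h := hlog.continuousOn_mul hf
    ⟨h.1.ofReal, h.2.ofReal⟩
  simpa only [Complex.ofReal_mul, Real.log_abs] using
    hreal.mul_continuousOn (by fun_prop : ContinuousOn
      (fun ω : ℝ => Complex.exp (Complex.I * ω * t)) (Set.uIcc a b))

theorem conj_integral_log_abs_sub_mul_exp (f : ℝ → ℝ) (a b c t : ℝ) :
    conj (∫ ω in a..b, (f ω * Real.log |ω - c| : ℂ) * Complex.exp (Complex.I * ω * t)) =
      ∫ ω in (-b)..(-a), (f (-ω) * Real.log |ω + c| : ℂ) * Complex.exp (Complex.I * ω * t) := by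
  rw [← intervalIntegral.integral_comp_neg, ← intervalIntegral.intervalIntegral_conj]
  refine intervalIntegral.integral_congr fun ω _ => ?_
  have habs : |-ω + c| = |ω - c| := by rw [← abs_neg]; ring_nf
  simp only [map_mul, Complex.conj_ofReal, Complex.conj_I, ← Complex.exp_conj, neg_neg,
    Complex.ofReal_neg, habs]
  ring_nf

theorem log_term_add_conj (n : ℕ) (c a b t x : ℝ) :
    Complex.I ^ (n + 1) * c * ((a : ℂ) - b + Complex.I * Real.pi / 2) *
        ((t : ℂ) ^ (n + 1))⁻¹ * Complex.exp (Complex.I * x * t) +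
      conj (Complex.I ^ (n + 1) * (-1 : ℂ) ^ n * c * ((a : ℂ) - b + Complex.I * Real.pi / 2) *
        ((t : ℂ) ^ (n + 1))⁻¹ * Complex.exp (-(Complex.I * x * t))) =
      -Real.pi * (Complex.I ^ n * c * ((t : ℂ) ^ (n + 1))⁻¹ * Complex.exp (Complex.I * x * t)) := by
  have hsign : (-Complex.I) ^ (n + 1) * (-1 : ℂ) ^ n = -Complex.I ^ (n + 1) := by
    rw [neg_pow, mul_right_comm, ← pow_add, Odd.neg_one_pow ⟨n, by ring⟩, neg_one_mul]
  simp only [map_mul, map_sub, map_add, map_div₀, map_inv₀, map_pow, map_neg, map_one,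
    map_ofNat, Complex.conj_I, Complex.conj_ofReal, ← Complex.exp_conj, neg_mul, neg_neg]
  rw [hsign]
  linear_combination (Real.pi * Complex.I ^ n * c * ((t : ℂ) ^ (n + 1))⁻¹ *
    Complex.exp (Complex.I * x * t)) * Complex.I_sq

theorem sum_log_terms_add_conj (N : ℕ) (c a : ℕ → ℝ) (b t x : ℝ) :
    (∑ n ∈ Finset.range N, Complex.I ^ (n + 1) * (c n : ℂ) *
        ((a n : ℂ) - b + Complex.I * Real.pi / 2) *
        ((t : ℂ) ^ (n + 1))⁻¹ * Complex.exp (Complex.I * x * t)) +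
      conj (∑ n ∈ Finset.range N, Complex.I ^ (n + 1) * (-1 : ℂ) ^ n * (c n : ℂ) *
        ((a n : ℂ) - b + Complex.I * Real.pi / 2) *
        ((t : ℂ) ^ (n + 1))⁻¹ * Complex.exp (-(Complex.I * x * t))) =
      -Real.pi * ∑ n ∈ Finset.range N,
        Complex.I ^ n * (c n : ℂ) * ((t : ℂ) ^ (n + 1))⁻¹ * Complex.exp (Complex.I * x * t) := by
  simp only [map_sum, Finset.mul_sum, ← Finset.sum_add_distrib, log_term_add_conj]

theorem Asymptotics.IsLittleO.conj_left {α F : Type*} [Norm F] {l : Filter α} {f : α → ℂ}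
    {g : α → F} (h : f =o[l] g) : (fun x => conj (f x)) =o[l] g :=
  isLittleO_norm_left.mp (by simpa only [RCLike.norm_conj] using h.norm_left)

theorem two_sided_fourier_log_singularity (γ₁ γ₂ ω₀ : ℝ) (h₁ : γ₁ < ω₀) (h₂ : ω₀ < γ₂)
    (N : ℕ) (φ : ℝ → ℝ)
    (hφ : ContDiffOn ℝ N φ (Set.Icc γ₁ γ₂))
    (A Atil B : ℝ → ℂ)
    (hA : ∀ t : ℝ, A t = ∫ ω in ω₀..γ₂,
      (φ ω * Real.log |ω - ω₀| : ℂ) * Complex.exp (Complex.I * ω * t))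
    (hAtil : ∀ t : ℝ, Atil t = ∫ ω in γ₁..ω₀,
      (φ ω * Real.log |ω - ω₀| : ℂ) * Complex.exp (Complex.I * ω * t))
    (hB : ∀ t : ℝ, B t = ∫ ω in (-ω₀)..(-γ₁),
      (φ (-ω) * Real.log |ω + ω₀| : ℂ) * Complex.exp (Complex.I * ω * t))
    (hAasym :
      (fun t : ℝ => A t - ∑ n ∈ Finset.range N,
        Complex.I ^ (n + 1) * ((iteratedDerivWithin n φ (Set.Icc γ₁ γ₂) ω₀ : ℝ) : ℂ) *
          ((digamma (n + 1) : ℂ) - (Real.log t : ℂ) + Complex.I * Real.pi / 2) *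
          ((t : ℂ) ^ (n + 1))⁻¹ * Complex.exp (Complex.I * ω₀ * t))
        =o[atTop] fun t : ℝ => (t ^ N)⁻¹)
    (hBasym :
      (fun t : ℝ => B t - ∑ n ∈ Finset.range N,
        Complex.I ^ (n + 1) * (-1 : ℂ) ^ n *
          ((iteratedDerivWithin n φ (Set.Icc γ₁ γ₂) ω₀ : ℝ) : ℂ) *
          ((digamma (n + 1) : ℂ) - (Real.log t : ℂ) + Complex.I * Real.pi / 2) *
          ((t : ℂ) ^ (n + 1))⁻¹ * Complex.exp (-(Complex.I * ω₀ * t)))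
        =o[atTop] fun t : ℝ => (t ^ N)⁻¹) :
    (∀ t : ℝ, Atil t = starRingEnd ℂ (B t)) ∧
    (∀ t : ℝ, A t + Atil t = ∫ ω in γ₁..γ₂,
      (φ ω * Real.log |ω - ω₀| : ℂ) * Complex.exp (Complex.I * ω * t)) ∧
    ((fun t : ℝ => A t + Atil t - (-Real.pi) * ∑ n ∈ Finset.range N,
        Complex.I ^ n * ((iteratedDerivWithin n φ (Set.Icc γ₁ γ₂) ω₀ : ℝ) : ℂ) *
          ((t : ℂ) ^ (n + 1))⁻¹ * Complex.exp (Complex.I * ω₀ * t))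
      =o[atTop] fun t : ℝ => (t ^ N)⁻¹) := by
  have hAtil_conj (t : ℝ) : Atil t = conj (B t) := by
    rw [hAtil, hB, ← conj_integral_log_abs_sub_mul_exp, Complex.conj_conj]
  refine ⟨hAtil_conj, fun t => ?_, ?_⟩
  · have hcont := hφ.continuousOn
    rw [hA, hAtil, add_comm]
    exact intervalIntegral.integral_add_adjacent_intervals
      (intervalIntegrable_ofReal_mul_log_abs_sub_mul_exp t
        (hcont.mono (Set.uIcc_subset_Icc ⟨le_rfl, by linarith⟩ ⟨h₁.le, h₂.le⟩)))
      (intervalIntegrable_ofReal_mul_log_abs_sub_mul_exp t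
        (hcont.mono (Set.uIcc_subset_Icc ⟨h₁.le, h₂.le⟩ ⟨by linarith, le_rfl⟩)))
  · refine (hAasym.add hBasym.conj_left).congr_left fun t => ?_
    rw [hAtil_conj, ← sum_log_terms_add_conj, map_sub]
    ring
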